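/- In the regular local ring R = k[[x, y, z]] over a field k with m = (x, y, z), let Q = (x, y², zⁿ) for n ≥ 2 and I = Q : m. Then I = (x, y², yz^{n−1}, zⁿ) and I² = QI. -/

import Mathlib

open IsLocalRing TensorProduct

noncomputable section

/-- The minimal number of generators of a module. -/
def mu (R : Type) [CommRing R] (M : Type) [AddCommGroup M] [Module R M] : ℕ :=
  sInf {n : ℕ | ∃ s : Finset M, s.card = n ∧ Submodule.span R (s : Set M) = ⊤}

/-- The length of a module (as a natural number), defined as the Krull dimension of its
lattice of submodules. -/
def lengthNat (R : Type) [CommRing R] (M : Type) [AddCommGroup M] [Module R M] : ℕ :=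
  ((Order.krullDim (Submodule R M)).unbotD 0).toNat

/-- The (Krull) dimension of a module. -/
def moduleDim (R : Type) [CommRing R] (M : Type) [AddCommGroup M] [Module R M] : WithBot ℕ∞ :=
  ringKrullDim (R ⧸ Module.annihilator R M)

open Filter in
/-- The Hilbert–Samuel multiplicity `e(J, M)` of a module `M` with respect to an ideal `J`. -/
def eMult (R : Type) [CommRing R] (J : Ideal R) (M : Type) [AddCommGroup M] [Module R M] : ℕ :=
  sInf {e : ℕ | ∃ d : ℕ, moduleDim R M = (d : ℕ∞) ∧
    Tendsto (fun n : ℕ =>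
        ((d.factorial : ℝ) * (lengthNat R (M ⧸ (J ^ n • ⊤ : Submodule R M)))) / (n : ℝ) ^ d)
      atTop (nhds (e : ℝ))}

/-- A parameter ideal of a local ring: an ideal generated by a system of parameters. -/
def Ideal.IsParameterIdeal {R : Type} [CommRing R] [IsLocalRing R] (Q : Ideal R) : Prop :=
  ∃ (d : ℕ) (a : Fin d → R), ringKrullDim R = (d : ℕ) ∧ Q = Ideal.span (Set.range a) ∧
    Q ≤ maximalIdeal R ∧ maximalIdeal R ≤ Q.radical

/-- A subsystem of parameters: a family extendable to a full system of parameters. -/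
def IsSubsystemOfParameters {R : Type} [CommRing R] [IsLocalRing R] {r : ℕ}
    (a : Fin r → R) : Prop :=
  ∃ (d : ℕ) (hrd : r ≤ d) (b : Fin d → R), ringKrullDim R = (d : ℕ) ∧
    (∀ i : Fin r, b (Fin.castLE hrd i) = a i) ∧
    (Ideal.span (Set.range b)).IsParameterIdeal

/-- A Noetherian local ring is Cohen–Macaulay iff it admits a regular sequence in the maximal
ideal whose length is the Krull dimension. -/
def IsCohenMacaulayLocalRing (R : Type) [CommRing R] [IsLocalRing R] : Prop :=
  IsNoetherianRing R ∧
    ∃ (d : ℕ) (a : Fin d → R), ringKrullDim R = (d : ℕ) ∧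
      (∀ i, a i ∈ maximalIdeal R) ∧ RingTheory.Sequence.IsRegular R (List.ofFn a)

open CategoryTheory in
/-- The `i`-th Ext module of two modules over `R`. -/
def extGp (R : Type) [CommRing R] (M N : Type) [AddCommGroup M] [Module R M]
    [AddCommGroup N] [Module R N] (i : ℕ) : ModuleCat R :=
  ((Ext R (ModuleCat R) i).obj (Opposite.op (ModuleCat.of R M))).obj (ModuleCat.of R N)

/-- A canonical module of a (Cohen–Macaulay) Noetherian local ring `R`, characterized by
`Ext^i(k, K) = 0` for `i ≠ d` and `Ext^d(k, K) ≅ k`, where `d = dim R`. -/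
def IsCanonicalModule (R : Type) [CommRing R] [IsLocalRing R]
    (M : Type) [AddCommGroup M] [Module R M] : Prop :=
  Module.Finite R M ∧ ∃ d : ℕ, ringKrullDim R = (d : ℕ) ∧
    (∀ i : ℕ, i ≠ d → Subsingleton (extGp R (ResidueField R) M i)) ∧
    Nonempty ((extGp R (ResidueField R) M d) ≃ₗ[R] ResidueField R)

/-- Gorenstein local ring. -/
def IsGorensteinLocalRing (R : Type) [CommRing R] [IsLocalRing R] : Prop :=
  IsNoetherianRing R ∧ IsCanonicalModule R R

/-- A commutative ring is Gorenstein if all its localizations at primes are Gorenstein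
local rings. -/
def IsGorensteinRing (S : Type) [CommRing S] : Prop :=
  ∀ (P : Ideal S) (hP : P.IsPrime), letI := hP; IsGorensteinLocalRing (Localization.AtPrime P)

/-- Regular local ring: Noetherian local and the maximal ideal is generated by `dim R`
elements. -/
def IsRegularLocalRingP (R : Type) [CommRing R] [IsLocalRing R] : Prop :=
  IsNoetherianRing R ∧ ringKrullDim R = (mu R (maximalIdeal R) : ℕ)

/-- The Cohen–Macaulay type: the minimal number of generators of a canonical module. -/
def CMtype (R : Type) [CommRing R] [IsLocalRing R] : ℕ :=
  sInf {t : ℕ | ∃ K : ModuleCat.{0} R, IsCanonicalModule R K ∧ mu R K = t}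

/-- Almost Gorenstein local ring (Goto–Takahashi–Taniguchi): there is an embedding
`R ↪ K_R` into a canonical module whose cokernel `C` satisfies `μ(C) = e⁰_𝔪(C)`. -/
def IsAlmostGorensteinLocalRing (R : Type) [CommRing R] [IsLocalRing R] : Prop :=
  IsNoetherianRing R ∧ IsCohenMacaulayLocalRing R ∧
  ∃ (K : ModuleCat.{0} R), IsCanonicalModule R K ∧
    ∃ f : R →ₗ[R] K, Function.Injective f ∧
      mu R (K ⧸ LinearMap.range f) = eMult R (maximalIdeal R) (K ⧸ LinearMap.range f)

/-- `pd_R M ≤ n`, via vanishing of Ext. -/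
def projDimLE (R : Type) [CommRing R] (M : Type) [AddCommGroup M] [Module R M] (n : ℕ) : Prop :=
  ∀ (N : ModuleCat.{0} R) (i : ℕ), n < i → Subsingleton (extGp R M N i)

/-- The ideal `J` contains a regular sequence of length `g`. -/
def hasGradeGE (R : Type) [CommRing R] (J : Ideal R) (g : ℕ) : Prop :=
  ∃ a : Fin g → R, (∀ i, a i ∈ J) ∧ RingTheory.Sequence.IsRegular R (List.ofFn a)

/-- The ideal `J` has grade `g`. -/
def hasGrade (R : Type) [CommRing R] (J : Ideal R) (g : ℕ) : Prop :=
  hasGradeGE R J g ∧ ¬ hasGradeGE R J (g + 1)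

/-- `J` is a perfect ideal of grade `g`: `grade J = pd_R (R/J) = g`. -/
def IsPerfectIdealOfGrade (R : Type) [CommRing R] (J : Ideal R) (g : ℕ) : Prop :=
  hasGrade R J g ∧ projDimLE R (R ⧸ J) g ∧ ∀ m : ℕ, projDimLE R (R ⧸ J) m → g ≤ m

end

/-!
`Q` and `(x, y², yzⁿ⁻¹, zⁿ)` are monomial ideals, and a power series lies in the ideal spanned by
finitely many monomials iff every exponent in its support dominates one of theirs. Since
`f ∈ Q : m` means `fx, fy, fz ∈ Q`, the colon ideal is read off exponentwise from `fy` and `fz`.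
For the second claim, `I = Q + (g)` with `g = yzⁿ⁻¹`, and `g² = zⁿ · y²zⁿ⁻² ∈ QI` once `n ≥ 2`.
-/

namespace MvPowerSeries

variable {σ R : Type*}

theorem monomial_one_dvd_iff [Semiring R] {d : σ →₀ ℕ} {f : MvPowerSeries σ R} :
    monomial d 1 ∣ f ↔ ∀ e, coeff e f ≠ 0 → d ≤ e := by
  constructor
  · rintro ⟨g, rfl⟩ e he
    rw [coeff_monomial_mul] at he
    by_contra hde
    exact he (if_neg hde)
  · intro h
    let g : MvPowerSeries σ R := fun e => coeff (e + d) f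
    refine ⟨g, ext fun e => ?_⟩
    rw [coeff_monomial_mul, one_mul]
    split_ifs with hde
    · exact congrArg (coeff · f) (tsub_add_cancel_of_le hde).symm
    · exact not_ne_iff.mp (mt (h e) hde)

variable [CommSemiring R]

theorem exists_le_of_mem_ideal_span_monomial_image {S : Set (σ →₀ ℕ)} {f : MvPowerSeries σ R}
    (hf : f ∈ Ideal.span ((fun d => monomial d (1 : R)) '' S)) {e : σ →₀ ℕ}
    (he : coeff e f ≠ 0) : ∃ d ∈ S, d ≤ e := by
  classical
  induction hf using Submodule.span_induction generalizing e with
  | mem g hg =>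
    obtain ⟨d, hd, rfl⟩ := hg
    exact ⟨d, hd, (eq_of_coeff_monomial_ne_zero he).ge⟩
  | zero => simp at he
  | add a b _ _ ha hb =>
    rw [map_add] at he
    by_cases hae : coeff e a = 0
    · exact hb (by simpa [hae] using he)
    · exact ha hae
  | smul a b _ hb =>
    obtain ⟨p, hp, hpne⟩ := Finset.exists_ne_zero_of_sum_ne_zero (coeff_mul e a b ▸ he)
    obtain ⟨d, hd, hde⟩ := hb (right_ne_zero_of_mul hpne)
    exact ⟨d, hd, hde.trans (Finset.HasAntidiagonal.mem_antidiagonal.mp hp ▸ le_add_self)⟩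

-- Unlike `MvPolynomial.mem_ideal_span_monomial_image`, this needs `D` finite: a power series
-- may have infinitely many terms, each dominating a different exponent.
theorem mem_ideal_span_monomial_image {f : MvPowerSeries σ R} {D : Finset (σ →₀ ℕ)} :
    f ∈ Ideal.span ((fun d => monomial d (1 : R)) '' D) ↔
      ∀ e, coeff e f ≠ 0 → ∃ d ∈ D, d ≤ e := by
  classical
  refine ⟨fun hf e he => exists_le_of_mem_ideal_span_monomial_image hf he, ?_⟩
  induction D using Finset.induction_on generalizing f with
  | empty =>
    intro h
    rw [show f = 0 from ext fun e => by simpa using h e]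
    exact zero_mem _
  | insert d D _ ih =>
    intro h
    set f₁ : MvPowerSeries σ R := fun e => if d ≤ e then coeff e f else 0
    set f₂ : MvPowerSeries σ R := fun e => if d ≤ e then 0 else coeff e f
    have hf : f = f₁ + f₂ := ext fun e => by
      change coeff e f = (if d ≤ e then coeff e f else 0) + (if d ≤ e then 0 else coeff e f)
      split_ifs <;> simp
    have hf₁ : monomial d 1 ∣ f₁ := monomial_one_dvd_iff.mpr fun e he => by
      by_contra hde
      exact he (if_neg hde)
    have hf₂ : f₂ ∈ Ideal.span ((fun d => monomial d (1 : R)) '' D) := ih fun e he => by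
      change (if d ≤ e then 0 else coeff e f) ≠ 0 at he
      split_ifs at he with hde
      · exact absurd rfl he
      · simpa [hde] using h e he
    rw [hf, Finset.coe_insert, Set.image_insert_eq, Ideal.span_insert]
    exact Submodule.add_mem_sup (Ideal.mem_span_singleton.mpr hf₁) hf₂

theorem exists_le_add_single_of_mul_X_mem {S : Set (σ →₀ ℕ)} {f : MvPowerSeries σ R} {i : σ}
    (hf : f * X i ∈ Ideal.span ((fun d => monomial d (1 : R)) '' S)) {e : σ →₀ ℕ}
    (he : coeff e f ≠ 0) : ∃ d ∈ S, d ≤ e + Finsupp.single i 1 :=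
  exists_le_of_mem_ideal_span_monomial_image hf <| by
    rwa [X_def, coeff_add_mul_monomial, mul_one]

end MvPowerSeries

theorem Ideal.sq_eq_mul_of_eq_sup_span_singleton {R : Type*} [CommSemiring R] {Q I : Ideal R}
    {g : R} (hI : I = Q ⊔ span {g}) (hg : g ^ 2 ∈ Q * I) : I ^ 2 = Q * I := by
  refine le_antisymm ?_ (sq I ▸ mul_mono_left (hI ▸ le_sup_left))
  have hgg : span {g} * span {g} ≤ Q * I := by
    rwa [span_singleton_mul_span_singleton, ← sq, span_singleton_le_iff_mem]
  have hgQ : span {g} * Q ≤ Q * I := mul_comm Q _ ▸ mul_mono_right (hI ▸ le_sup_right)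
  calc I ^ 2 = (Q ⊔ span {g}) * I := by rw [sq, ← hI]
    _ = Q * I ⊔ (span {g} * Q ⊔ span {g} * span {g}) := by rw [sup_mul, ← mul_sup, ← hI]
    _ ≤ Q * I := sup_le le_rfl (sup_le hgQ hgg)

section

open MvPowerSeries Finsupp

noncomputable def paramExponents (n : ℕ) : Finset (Fin 3 →₀ ℕ) :=
  {single 0 1, single 1 2, single 2 n}

noncomputable def socleExponents (n : ℕ) : Finset (Fin 3 →₀ ℕ) :=
  {single 0 1, single 1 2, single 1 1 + single 2 (n - 1), single 2 n}

theorem exists_socleExponents_le {n : ℕ} {e : Fin 3 →₀ ℕ}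
    (h₁ : ∃ d ∈ paramExponents n, d ≤ e + single 1 1)
    (h₂ : ∃ d ∈ paramExponents n, d ≤ e + single 2 1) : ∃ d ∈ socleExponents n, d ≤ e := by
  simp only [paramExponents, socleExponents, Finset.mem_insert, Finset.mem_singleton, le_def,
    coe_add, Pi.add_apply, Fin.forall_fin_succ, ne_eq, zero_ne_one, not_false_eq_true,
    single_eq_of_ne, add_zero, Fin.succ_zero_eq_one, single_eq_same, Fin.succ_one_eq_two,
    Fin.reduceEq, IsEmpty.forall_iff, and_true, exists_eq_or_imp, one_ne_zero, zero_le, and_self,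
    Nat.reduceLeDiff, true_and, existsAndEq, single_tsub, coe_tsub, Pi.sub_apply, tsub_self,
    zero_add, tsub_le_iff_right] at h₁ h₂ ⊢
  omega

variable {R : Type*} [CommSemiring R]

theorem span_param_eq_span_monomial (n : ℕ) :
    (Ideal.span {X 0, X 1 ^ 2, X 2 ^ n} : Ideal (MvPowerSeries (Fin 3) R)) =
      Ideal.span ((fun d => monomial d (1 : R)) '' paramExponents n) := by
  simp only [paramExponents, Finset.coe_insert, Finset.coe_singleton, Set.image_insert_eq,
    Set.image_singleton, X_pow_eq]
  simp only [X_def]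

theorem span_socle_eq_span_monomial (n : ℕ) :
    (Ideal.span {X 0, X 1 ^ 2, X 1 * X 2 ^ (n - 1), X 2 ^ n} :
        Ideal (MvPowerSeries (Fin 3) R)) =
      Ideal.span ((fun d => monomial d (1 : R)) '' socleExponents n) := by
  simp only [socleExponents, Finset.coe_insert, Finset.coe_singleton, Set.image_insert_eq,
    Set.image_singleton, X_pow_eq]
  simp only [X_def, monomial_mul_monomial, mul_one]

theorem span_socle_eq_sup (n : ℕ) :
    (Ideal.span {X 0, X 1 ^ 2, X 1 * X 2 ^ (n - 1), X 2 ^ n} :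
        Ideal (MvPowerSeries (Fin 3) R)) =
      Ideal.span {X 0, X 1 ^ 2, X 2 ^ n} ⊔ Ideal.span {X 1 * X 2 ^ (n - 1)} := by
  rw [← Ideal.span_union]
  congr 1
  ext
  simp only [Set.mem_insert_iff, Set.mem_singleton_iff, Set.union_singleton]
  tauto

theorem span_param_colon_eq {n : ℕ} (hn : n ≠ 0) :
    (Ideal.span {X 0, X 1 ^ 2, X 2 ^ n} : Ideal (MvPowerSeries (Fin 3) R)).colon
        (Ideal.span {X 0, X 1, X 2} : Ideal (MvPowerSeries (Fin 3) R)) =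
      Ideal.span {X 0, X 1 ^ 2, X 1 * X 2 ^ (n - 1), X 2 ^ n} := by
  set Q : Ideal (MvPowerSeries (Fin 3) R) := Ideal.span {X 0, X 1 ^ 2, X 2 ^ n} with hQ
  have mem_colon {f} : f ∈ Q.colon (Ideal.span {X 0, X 1, X 2} : Ideal (MvPowerSeries (Fin 3) R))
      ↔ f * X 0 ∈ Q ∧ f * X 1 ∈ Q ∧ f * X 2 ∈ Q := by
    simp only [Submodule.colon_span, Submodule.mem_colon, Set.mem_insert_iff,
      Set.mem_singleton_iff, smul_eq_mul, forall_eq_or_imp, forall_eq]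
  refine le_antisymm (fun f hf => ?_) ?_
  · obtain ⟨-, hy, hz⟩ := mem_colon.mp hf
    rw [hQ, span_param_eq_span_monomial] at hy hz
    rw [span_socle_eq_span_monomial, mem_ideal_span_monomial_image]
    exact fun e he => exists_socleExponents_le (exists_le_add_single_of_mul_X_mem hy he)
      (exists_le_add_single_of_mul_X_mem hz he)
  · rw [span_socle_eq_sup, sup_le_iff, Ideal.span_singleton_le_iff_mem]
    refine ⟨Ideal.le_colon, mem_colon.mpr ⟨?_, ?_, ?_⟩⟩
    · exact Q.mul_mem_left _ (Ideal.subset_span (by simp))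
    · rw [mul_right_comm, ← sq]
      exact Q.mul_mem_right _ (Ideal.subset_span (by simp))
    · rw [mul_assoc, pow_sub_one_mul hn]
      exact Q.mul_mem_left _ (Ideal.subset_span (by simp))

theorem sq_X_mul_X_pow_sub_one_mem_mul {n : ℕ} (hn : 2 ≤ n) :
    (X 1 * X 2 ^ (n - 1)) ^ 2 ∈
      (Ideal.span {X 0, X 1 ^ 2, X 2 ^ n} : Ideal (MvPowerSeries (Fin 3) R)) *
        Ideal.span {X 0, X 1 ^ 2, X 1 * X 2 ^ (n - 1), X 2 ^ n} := by
  have hsq : (X 1 * X 2 ^ (n - 1) : MvPowerSeries (Fin 3) R) ^ 2 =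
      X 2 ^ n * (X 1 ^ 2 * X 2 ^ (n - 2)) := by
    rw [mul_pow, ← pow_mul, show (n - 1) * 2 = n + (n - 2) by omega, pow_add]
    ring
  rw [hsq]
  exact Ideal.mul_mem_mul (Ideal.subset_span (by simp))
    (Ideal.mul_mem_right _ _ (Ideal.subset_span (by simp)))

end

theorem socle_example_power_series
    (k : Type) [Field k] (n : ℕ) (hn : 2 ≤ n)
    (x y z : MvPowerSeries (Fin 3) k)
    (hx : x = MvPowerSeries.X 0) (hy : y = MvPowerSeries.X 1)
    (hz : z = MvPowerSeries.X 2)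
    (m Q I : Ideal (MvPowerSeries (Fin 3) k))
    (hm : m = Ideal.span {x, y, z})
    (hQ : Q = Ideal.span {x, y ^ 2, z ^ n})
    (hI : I = Q.colon m) :
    I = Ideal.span {x, y ^ 2, y * z ^ (n - 1), z ^ n} ∧ I ^ 2 = Q * I := by
  subst hx hy hz hm hQ hI
  rw [span_param_colon_eq (by omega : n ≠ 0)]
  exact ⟨rfl, Ideal.sq_eq_mul_of_eq_sup_span_singleton (span_socle_eq_sup n)
    (sq_X_mul_X_pow_sub_one_mem_mul hn)⟩
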